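/- arXiv:1901.02001 — 5 statements merged into one kernel-verified Lean document; each statement's English description precedes it below -/
import Mathlib

section
/- For any μ₁,…,μₙ ∈ [0,1], the n×n matrix M with entries M_{ij} = 1 − |μᵢ − μⱼ| has non-negative determinant. -/
/-!
Split `1 - |a - b| = min a b + min (1 - a) (1 - b)`. On `[0, ∞)` the kernel `min a b` is the
Lebesgue measure of `(0, a] ∩ (0, b]`, so it is a Gram matrix in `L²` and positive semidefinite.
Applied to `μ` and `1 - μ`, the matrix is a sum of two positive semidefinite matrices, whence its
determinant is nonnegative.
-/

open MeasureTheory Set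

theorem Matrix.posSemidef_of_min {ι : Type*} [Finite ι] (ν : ι → ℝ) (hν : ∀ i, 0 ≤ ν i) :
    Matrix.PosSemidef (Matrix.of fun i j : ι => min (ν i) (ν j)) := by
  convert posSemidef_matrix_measure_inter (μ := volume) (s := fun i => Ioc 0 (ν i))
    (fun _ => measurableSet_Ioc) (fun _ => measure_Ioc_lt_top.ne) using 2
  ext i j
  rw [Ioc_inter_Ioc, max_self, Real.volume_real_Ioc_of_le (le_min (hν i) (hν j)), sub_zero]

theorem one_sub_abs_sub_eq_min_add_min (a b : ℝ) :
    1 - |a - b| = min a b + min (1 - a) (1 - b) := by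
  rcases le_total a b with h | h
  · rw [abs_of_nonpos (sub_nonpos.2 h), min_eq_left h, min_eq_right (by linarith)]
    ring
  · rw [abs_of_nonneg (sub_nonneg.2 h), min_eq_right h, min_eq_left (by linarith)]
    ring

theorem moser_lemma_det_nonneg (n : ℕ) (μ : Fin n → ℝ)
    (hμ : ∀ i, μ i ∈ Set.Icc (0 : ℝ) 1) :
    0 ≤ Matrix.det (Matrix.of fun i j : Fin n => 1 - |μ i - μ j|) := by
  have hsplit : (Matrix.of fun i j : Fin n => 1 - |μ i - μ j|) =
      Matrix.of (fun i j => min (μ i) (μ j)) + Matrix.of fun i j => min (1 - μ i) (1 - μ j) := by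
    ext i j
    exact one_sub_abs_sub_eq_min_add_min (μ i) (μ j)
  rw [hsplit]
  refine (Matrix.PosSemidef.add ?_ ?_).det_nonneg
  · exact Matrix.posSemidef_of_min μ fun i => (hμ i).1
  · exact Matrix.posSemidef_of_min (fun i => 1 - μ i) fun i => sub_nonneg.2 (hμ i).2
end

section
/- For any μ₁,…,μₙ ∈ [0,1], the n×n matrix M with entries M_{ij} = 1 − |μᵢ − μⱼ| is positive semi-definite. -/
/-!
For `a, b ∈ [0, 1]` we have `1 - |a - b| = min a b + (1 - max a b)`, which is the length of
`(0, a] ∩ (0, b]` plus that of `(a, 1] ∩ (b, 1]`. So the matrix is the sum of two matrices of the form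
`λ(Sᵢ ∩ Sⱼ)`, i.e. Gram matrices of indicator functions in `L²`, and both are positive semidefinite.
-/

open MeasureTheory Set

theorem Matrix.PosSemidef.sum_mul_mul_nonneg {ι : Type*} [Fintype ι] {M : Matrix ι ι ℝ}
    (hM : M.PosSemidef) (c : ι → ℝ) : 0 ≤ ∑ i, ∑ j, c i * c j * M i j := by
  have h := hM.dotProduct_mulVec_nonneg c
  simp only [dotProduct, Matrix.mulVec, star_trivial, Pi.star_apply, Finset.mul_sum] at h
  exact h.trans_eq (Finset.sum_congr rfl fun i _ => Finset.sum_congr rfl fun j _ => by ring)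

theorem one_sub_abs_sub_eq_volume_real {a b : ℝ} (ha : a ∈ Icc 0 1) (hb : b ∈ Icc 0 1) :
    1 - |a - b| = volume.real (Ioc 0 a ∩ Ioc 0 b) + volume.real (Ioc a 1 ∩ Ioc b 1) := by
  rw [Ioc_inter_Ioc, Ioc_inter_Ioc, max_self, min_self,
    Real.volume_real_Ioc_of_le (le_min ha.1 hb.1), Real.volume_real_Ioc_of_le (max_le ha.2 hb.2)]
  rcases le_total a b with h | h
  · rw [abs_of_nonpos (sub_nonpos.2 h), min_eq_left h, max_eq_right h]; ring
  · rw [abs_of_nonneg (sub_nonneg.2 h), min_eq_right h, max_eq_left h]; ring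

theorem Matrix.posSemidef_one_sub_abs_sub {ι : Type*} [Finite ι] (μ : ι → ℝ)
    (hμ : ∀ i, μ i ∈ Icc 0 1) : (Matrix.of fun i j => 1 - |μ i - μ j|).PosSemidef := by
  have hsplit : Matrix.of (fun i j => 1 - |μ i - μ j|) =
      Matrix.of (fun i j => volume.real (Ioc 0 (μ i) ∩ Ioc 0 (μ j))) +
        Matrix.of (fun i j => volume.real (Ioc (μ i) 1 ∩ Ioc (μ j) 1)) := by
    ext i j
    exact one_sub_abs_sub_eq_volume_real (hμ i) (hμ j)
  rw [hsplit]
  exact (posSemidef_matrix_measure_inter (fun _ => measurableSet_Ioc)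
      fun _ => measure_Ioc_lt_top.ne).add
    (posSemidef_matrix_measure_inter (fun _ => measurableSet_Ioc) fun _ => measure_Ioc_lt_top.ne)

theorem moser_matrix_psd (n : ℕ) (μ : Fin n → ℝ)
    (hμ : ∀ i, μ i ∈ Set.Icc (0 : ℝ) 1) (c : Fin n → ℝ) :
    0 ≤ ∑ i : Fin n, ∑ j : Fin n, c i * c j * (1 - |μ i - μ j|) :=
  (Matrix.posSemidef_one_sub_abs_sub μ hμ).sum_mul_mul_nonneg c
end

section
/- The function k(u,v) = 1 − |u − v| if sign(u) = sign(v), else 0, defined on [−1,1]², is a positive semi-definite kernel: for all n, all α₁,…,αₙ ∈ [−1,1], and all c₁,…,cₙ ∈ ℝ, ∑ᵢ∑ⱼ cᵢcⱼ k(αᵢ,αⱼ) ≥ 0. -/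
/-!
Shift each point by three times its sign, `a u = u + 3 sign u`. Points of equal sign keep their
mutual distances, while points of different signs end up at distance at least `1`. Hence `k(u, v)`
is the triangle kernel `max (1 - |a u - a v|) 0`, which is the length of the overlap of the unit
intervals `[a u, a u + 1)` and `[a v, a v + 1)`. Overlap lengths form a Gram matrix in `L²`:
`∑ᵢ ∑ⱼ cᵢ cⱼ |Sᵢ ∩ Sⱼ| = ∫ (∑ᵢ cᵢ 𝟙_{Sᵢ})² ≥ 0`.
-/

open MeasureTheory Set

theorem sum_sum_mul_integral_mul_nonneg {X ι : Type*} [MeasurableSpace X] [Fintype ι]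
    (μ : Measure X) (f : ι → X → ℝ) (hf : ∀ i j, Integrable (fun x => f i x * f j x) μ)
    (c : ι → ℝ) :
    0 ≤ ∑ i, ∑ j, c i * c j * ∫ x, f i x * f j x ∂μ := by
  have hexpand : ∀ x, (∑ i, c i * f i x) ^ 2 = ∑ i, ∑ j, c i * c j * (f i x * f j x) :=
    fun x => by
      rw [sq, Finset.sum_mul_sum]
      exact Finset.sum_congr rfl fun i _ => Finset.sum_congr rfl fun j _ => mul_mul_mul_comm ..
  have hsq : ∑ i, ∑ j, c i * c j * ∫ x, f i x * f j x ∂μ =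
      ∫ x, (∑ i, c i * f i x) ^ 2 ∂μ := by
    simp_rw [hexpand, ← integral_const_mul]
    rw [integral_finsetSum _ fun i _ => integrable_finsetSum _ fun j _ => (hf i j).const_mul _]
    exact Finset.sum_congr rfl fun i _ =>
      (integral_finsetSum _ fun j _ => (hf i j).const_mul _).symm
  rw [hsq]
  exact integral_nonneg fun _ => sq_nonneg _

theorem sum_sum_mul_measureReal_inter_nonneg {X ι : Type*} [MeasurableSpace X] [Fintype ι]
    (μ : Measure X) (S : ι → Set X) (hS : ∀ i, MeasurableSet (S i)) (hfin : ∀ i, μ (S i) ≠ ⊤)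
    (c : ι → ℝ) :
    0 ≤ ∑ i, ∑ j, c i * c j * μ.real (S i ∩ S j) := by
  have hind : ∀ i j, (fun x => (S i).indicator 1 x * (S j).indicator 1 x) =
      (S i ∩ S j).indicator (1 : X → ℝ) := fun i j => by rw [inter_indicator_one]; rfl
  have hint : ∀ i j, ∫ x, (S i).indicator 1 x * (S j).indicator 1 x ∂μ = μ.real (S i ∩ S j) :=
    fun i j => by rw [hind, integral_indicator_one ((hS i).inter (hS j))]
  simp_rw [← hint]
  refine sum_sum_mul_integral_mul_nonneg μ _ (fun i j => ?_) c
  rw [hind]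
  exact (integrable_indicator_iff ((hS i).inter (hS j))).2
    (integrableOn_const (measure_inter_lt_top_of_left_ne_top (hfin i)).ne)

theorem volume_real_Ico_inter_Ico_add_one (a b : ℝ) :
    volume.real (Ico a (a + 1) ∩ Ico b (b + 1)) = max (1 - |a - b|) 0 := by
  rw [Ico_inter_Ico, Real.volume_real_Ico, min_add_add_right, ← max_sub_min_eq_abs']
  ring_nf
theorem ite_sign_eq_max_one_sub_abs {u v : ℝ} (hu : u ∈ Icc (-1 : ℝ) 1)
    (hv : v ∈ Icc (-1 : ℝ) 1) :
    (if Real.sign u = Real.sign v then 1 - |u - v| else 0) =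
      max (1 - |(u + 3 * Real.sign u) - (v + 3 * Real.sign v)|) 0 := by
  obtain ⟨hu₁, hu₂⟩ := hu
  obtain ⟨hv₁, hv₂⟩ := hv
  rcases lt_trichotomy u 0 with hu | rfl | hu <;> rcases lt_trichotomy v 0 with hv | rfl | hv <;>
    simp [Real.sign_of_neg, Real.sign_of_pos, abs_le, le_abs, *] <;> grind

theorem analogy_kernel_psd (n : ℕ) (α : Fin n → ℝ)
    (hα : ∀ i, α i ∈ Set.Icc (-1 : ℝ) 1) (c : Fin n → ℝ) :
    0 ≤ ∑ i : Fin n, ∑ j : Fin n, c i * c j *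
      (if Real.sign (α i) = Real.sign (α j) then 1 - |α i - α j| else 0) := by
  set a : Fin n → ℝ := fun i => α i + 3 * Real.sign (α i)
  have hk : ∀ i j, (if Real.sign (α i) = Real.sign (α j) then 1 - |α i - α j| else 0) =
      volume.real (Ico (a i) (a i + 1) ∩ Ico (a j) (a j + 1)) := fun i j => by
    rw [volume_real_Ico_inter_Ico_add_one, ite_sign_eq_max_one_sub_abs (hα i) (hα j)]
  simp_rw [hk]
  exact sum_sum_mul_measureReal_inter_nonneg volume _ (fun _ => measurableSet_Ico)
    (fun _ => measure_Ico_lt_top.ne) c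
end

section
/- A symmetric real n×n matrix all of whose principal minors (determinants of principal submatrices) are non-negative is positive semi-definite. -/
/-!
The coefficient of `X ^ k` in `det (1 + X • M)` is the sum of the `k × k` principal minors of `M`,
so all its coefficients are nonnegative and its constant term is `1`; hence `det (1 + t • M) ≥ 1`
for every `t ≥ 0`. A negative eigenvalue `λ` of the symmetric matrix `M` would make
`1 - λ⁻¹ • M` singular.
-/

open Matrix Polynomial
open scoped ComplexOrder

namespace Matrix

variable {n : Type*} [Fintype n] [DecidableEq n]

theorem eval_det_one_add_X_smul {R : Type*} [CommRing R] (M : Matrix n n R) (t : R) :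
    (det (1 + (X : R[X]) • M.map C)).eval t = det (1 + t • M) := by
  rw [← coe_evalRingHom, RingHom.map_det]
  congr 1
  ext i j
  simp [one_apply, apply_ite, mul_comm t]

theorem one_le_det_one_add_smul_of_principal_minors_nonneg {R : Type*} [CommRing R]
    [PartialOrder R] [IsOrderedRing R] (M : Matrix n n R)
    (hminors : ∀ s : Finset n, 0 ≤ (M.submatrix (Subtype.val : s → n) Subtype.val).det)
    {t : R} (ht : 0 ≤ t) : 1 ≤ det (1 + t • M) := by
  set p : R[X] := det (1 + (X : R[X]) • M.map C)
  have hcoeff : ∀ k, 0 ≤ p.coeff k := fun k => by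
    rw [coeff_det_one_add_X_smul_eq_sum_minors]
    exact Finset.sum_nonneg fun s _ => hminors s
  have hconst : p.coeff 0 = 1 := by
    rw [coeff_zero_eq_eval_zero, eval_det_one_add_X_smul, zero_smul, add_zero, det_one]
  rw [← eval_det_one_add_X_smul, eval_eq_sum_range]
  calc (1 : R) = p.coeff 0 * t ^ 0 := by rw [hconst, pow_zero, mul_one]
    _ ≤ _ := Finset.single_le_sum (fun k _ => mul_nonneg (hcoeff k) (pow_nonneg ht k))
        (Finset.mem_range.2 p.natDegree.succ_pos)

theorem IsHermitian.posSemidef_of_det_one_add_smul_ne_zero {𝕜 : Type*} [RCLike 𝕜]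
    {A : Matrix n n 𝕜} (hA : A.IsHermitian) (hdet : ∀ t : ℝ, 0 ≤ t → det (1 + t • A) ≠ 0) :
    A.PosSemidef := by
  refine hA.posSemidef_iff_eigenvalues_nonneg.2 fun i => show (0 : ℝ) ≤ _ from ?_
  by_contra! hneg
  set v := ⇑(hA.eigenvectorBasis i)
  set t := -(hA.eigenvalues i)⁻¹
  have hker : (1 + t • A) *ᵥ v = 0 := by
    rw [add_mulVec, one_mulVec, smul_mulVec, hA.mulVec_eigenvectorBasis, smul_smul,
      show t * hA.eigenvalues i = -1 by simp [t, hneg.ne], neg_one_smul, add_neg_cancel]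
  have hv : v ≠ 0 := fun hv =>
    hA.eigenvectorBasis.orthonormal.ne_zero i (by ext j; exact congrFun hv j)
  exact hdet t (neg_nonneg.2 (inv_nonpos.2 hneg.le)) (exists_mulVec_eq_zero_iff.1 ⟨v, hv, hker⟩)

end Matrix

theorem psd_of_nonneg_principal_minors (n : ℕ) (M : Matrix (Fin n) (Fin n) ℝ)
    (hsymm : M.IsSymm)
    (hminors : ∀ S : Finset (Fin n),
      0 ≤ (M.submatrix (fun i : S => (i : Fin n)) (fun i : S => (i : Fin n))).det) :
    M.PosSemidef := by
  refine (isHermitian_iff_isSymm.2 hsymm).posSemidef_of_det_one_add_smul_ne_zero fun t ht => ?_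
  exact (zero_lt_one.trans_le (M.one_le_det_one_add_smul_of_principal_minors_nonneg hminors ht)).ne'
end

section
/- The analogy kernel on pairs of vectors, k_A((a,b),(c,d)) = (1/d) ∑ᵢ k(aᵢ − bᵢ, cᵢ − dᵢ), where k(u,v) = 1 − |u − v| if sign(u) = sign(v) and 0 otherwise, is a positive semi-definite kernel on ([0,1]^d)². -/
/-!
For every real `u`, `v` the one-dimensional kernel factors as
`k(u, v) = [sign u = sign v] * (min |u| |v| + min (1 - |u|) (1 - |v|))`,
since `|u - v| = ||u| - |v||` when the signs agree. The factor `[g i = g j]` is the Gram matrix of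
the unit vectors `e (g i)` of `ℓ²`, and `min a b` (for `a, b ≥ 0`) is the Gram matrix of the
indicators of `(0, a]` in `L²(ℝ)`; the second `min` needs `|u| ≤ 1`. By the Schur product theorem
`k` is positive semidefinite, and `k_A` is a nonnegative multiple of a sum of such kernels.
-/

open MeasureTheory

namespace Matrix

variable {ι : Type*} [Finite ι]

theorem posSemidef_min_of_nonneg {a : ι → ℝ} (ha : ∀ i, 0 ≤ a i) :
    (of fun i j ↦ min (a i) (a j)).PosSemidef := by
  let v i := indicatorConstLp 2 (measurableSet_Ioc (a := 0) (b := a i))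
    (μ := (volume : Measure ℝ)) measure_Ioc_lt_top.ne (1 : ℝ)
  have : (of fun i j ↦ min (a i) (a j)) = gram ℝ v := by
    ext i j
    rw [gram_apply, L2.real_inner_indicatorConstLp_one_indicatorConstLp_one _ _
      measure_Ioc_lt_top.ne measure_Ioc_lt_top.ne, Set.Ioc_inter_Ioc,
      max_self, Real.volume_real_Ioc_of_le (le_min (ha i) (ha j)), sub_zero, of_apply]
  exact this ▸ posSemidef_gram ℝ v

theorem posSemidef_ite_eq {β : Type*} [DecidableEq β] (g : ι → β) :
    (of fun i j ↦ if g i = g j then (1 : ℝ) else 0).PosSemidef := by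
  let v i := lp.single (E := fun _ : β ↦ ℝ) 2 (g i) (1 : ℝ)
  have : (of fun i j ↦ if g i = g j then (1 : ℝ) else 0) = gram ℝ v := by
    ext i j
    rw [gram_apply, lp.inner_single_left, lp.single_apply, Pi.single_apply, of_apply]
    split_ifs <;> simp_all
  exact this ▸ posSemidef_gram ℝ v

theorem PosSemidef.sum_mul_mul_nonneg_s10 {ι : Type*} [Fintype ι] {A : Matrix ι ι ℝ}
    (hA : A.PosSemidef) (c : ι → ℝ) : 0 ≤ ∑ i, ∑ j, c i * c j * A i j := by
  have := hA.dotProduct_mulVec_nonneg c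
  simp only [dotProduct, mulVec, Finset.mul_sum, star_trivial] at this
  exact this.trans_eq (Finset.sum_congr rfl fun i _ ↦ Finset.sum_congr rfl fun j _ ↦ by ring)

end Matrix

noncomputable def analogyKernel (u v : ℝ) : ℝ :=
  if Real.sign u = Real.sign v then 1 - |u - v| else 0

theorem min_add_min_one_sub (a b : ℝ) :
    min a b + min (1 - a) (1 - b) = 1 - |a - b| := by
  rcases le_total a b with h | h
  · rw [min_eq_left h, min_eq_right (by linarith), abs_of_nonpos (by linarith)]; ring
  · rw [min_eq_right h, min_eq_left (by linarith), abs_of_nonneg (by linarith)]; ring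

theorem abs_sub_eq_abs_abs_sub_abs_of_sign_eq {u v : ℝ} (h : Real.sign u = Real.sign v) :
    |u - v| = |(|u| - |v|)| := by
  rcases lt_trichotomy u 0 with hu | rfl | hu <;> rcases lt_trichotomy v 0 with hv | rfl | hv <;>
    simp_all [Real.sign_of_neg, Real.sign_of_pos, abs_of_neg, abs_of_pos]
  · rw [abs_sub_comm, neg_add_eq_sub]
  all_goals norm_num at h

theorem analogyKernel_eq (u v : ℝ) :
    analogyKernel u v =
      (if Real.sign u = Real.sign v then 1 else 0) * (min |u| |v| + min (1 - |u|) (1 - |v|)) := by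
  rw [analogyKernel, min_add_min_one_sub]
  split_ifs with h
  · rw [one_mul, abs_sub_eq_abs_abs_sub_abs_of_sign_eq h]
  · rw [zero_mul]

open Matrix in
theorem posSemidef_analogyKernel {ι : Type*} [Finite ι] {u : ι → ℝ} (hu : ∀ i, |u i| ≤ 1) :
    (of fun i j ↦ analogyKernel (u i) (u j)).PosSemidef := by
  have : (of fun i j ↦ analogyKernel (u i) (u j)) =
      (of fun i j ↦ if Real.sign (u i) = Real.sign (u j) then 1 else 0) ⊙
        ((of fun i j ↦ min |u i| |u j|) + of fun i j ↦ min (1 - |u i|) (1 - |u j|)) := by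
    ext i j
    exact analogyKernel_eq _ _
  rw [this]
  exact (posSemidef_ite_eq _).hadamard
    ((posSemidef_min_of_nonneg fun i ↦ abs_nonneg _).add
      (posSemidef_min_of_nonneg fun i ↦ sub_nonneg.2 (hu i)))

theorem analogy_kernel_on_vectors_psd_general (d : ℕ)
    (n : ℕ) (x : Fin n → (Fin d → ℝ) × (Fin d → ℝ))
    (hx : ∀ i : Fin n, (∀ l, (x i).1 l ∈ Set.Icc (0 : ℝ) 1) ∧
      (∀ l, (x i).2 l ∈ Set.Icc (0 : ℝ) 1))
    (c : Fin n → ℝ) :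
    0 ≤ ∑ i : Fin n, ∑ j : Fin n, c i * c j *
      ((1 / (d : ℝ)) * ∑ l : Fin d,
        if Real.sign ((x i).1 l - (x i).2 l) = Real.sign ((x j).1 l - (x j).2 l)
        then 1 - |((x i).1 l - (x i).2 l) - ((x j).1 l - (x j).2 l)|
        else 0) := by
  let u : Fin d → Fin n → ℝ := fun l i ↦ (x i).1 l - (x i).2 l
  have hu l i : |u l i| ≤ 1 := by
    obtain ⟨⟨ha₀, ha₁⟩, ⟨hb₀, hb₁⟩⟩ := And.imp (· l) (· l) (hx i)
    exact abs_sub_le_iff.2 ⟨by linarith, by linarith⟩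
  have hpsd :
      (((1 : ℝ) / d) • ∑ l, Matrix.of fun i j ↦ analogyKernel (u l i) (u l j)).PosSemidef :=
    (Matrix.posSemidef_sum _ fun l _ ↦ posSemidef_analogyKernel (hu l)).smul (by positivity)
  simpa [Matrix.sum_apply, analogyKernel] using hpsd.sum_mul_mul_nonneg_s10 c

theorem analogy_kernel_on_vectors_psd (d : ℕ) (hd : 0 < d)
    (n : ℕ) (x : Fin n → (Fin d → ℝ) × (Fin d → ℝ))
    (hx : ∀ i : Fin n, (∀ l, (x i).1 l ∈ Set.Icc (0 : ℝ) 1) ∧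
      (∀ l, (x i).2 l ∈ Set.Icc (0 : ℝ) 1))
    (c : Fin n → ℝ) :
    0 ≤ ∑ i : Fin n, ∑ j : Fin n, c i * c j *
      ((1 / (d : ℝ)) * ∑ l : Fin d,
        if Real.sign ((x i).1 l - (x i).2 l) = Real.sign ((x j).1 l - (x j).2 l)
        then 1 - |((x i).1 l - (x i).2 l) - ((x j).1 l - (x j).2 l)|
        else 0) :=
  analogy_kernel_on_vectors_psd_general d n x hx c
end
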